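/- arXiv:2212.01993 — 4 statements merged into one kernel-verified Lean document; each statement's English description precedes it below -/
import Mathlib

section
/- The monoid M = Mon⟨a,b | ab=ba, aa=bb⟩ is left-cancellative. -/
/-!
Every element of `M` is `aⁿ` or `aⁿb`: `b` commutes with `a`, and `b aⁿ b = aⁿ⁺²` by `bb = aa`.
Both relations preserve the length of a word and the parity of its number of `b`s, so
`a ↦ (1, 0)`, `b ↦ (1, 1)` defines a homomorphism `M → ℕ × ZMod 2`; it sends `aⁿ ↦ (n, 0)` and
`aⁿb ↦ (n + 1, 1)`, hence is injective, and `M` inherits left cancellation from `ℕ × ZMod 2`.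
-/

/-- The relations of the monoid `Mon⟨a,b | ab = ba, aa = bb⟩` on the free monoid
over two generators `a = 0`, `b = 1`. -/
def abRels : FreeMonoid (Fin 2) → FreeMonoid (Fin 2) → Prop := fun x y =>
  (x = FreeMonoid.of 0 * FreeMonoid.of 1 ∧ y = FreeMonoid.of 1 * FreeMonoid.of 0) ∨
  (x = FreeMonoid.of 0 * FreeMonoid.of 0 ∧ y = FreeMonoid.of 1 * FreeMonoid.of 1)

namespace AbMonoid

open PresentedMonoid Multiplicative

local notation "𝐚" => PresentedMonoid.of abRels 0
local notation "𝐛" => PresentedMonoid.of abRels 1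

theorem a_mul_b : 𝐚 * 𝐛 = 𝐛 * 𝐚 := mk_eq_mk_of_rel (Or.inl ⟨rfl, rfl⟩)

theorem a_mul_a : 𝐚 * 𝐚 = 𝐛 * 𝐛 := mk_eq_mk_of_rel (Or.inr ⟨rfl, rfl⟩)

theorem b_mul_a_pow (n : ℕ) : 𝐛 * 𝐚 ^ n = 𝐚 ^ n * 𝐛 :=
  ((show Commute 𝐛 𝐚 from a_mul_b.symm).pow_right n).eq

theorem exists_eq_a_pow_or_eq_a_pow_mul_b (x : PresentedMonoid abRels) :
    ∃ n : ℕ, x = 𝐚 ^ n ∨ x = 𝐚 ^ n * 𝐛 := by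
  have hx : x ∈ Submonoid.closure (Set.range (of abRels)) := by
    simp only [closure_range_of, Submonoid.mem_top]
  induction hx using Submonoid.closure_induction_left with
  | one => exact ⟨0, .inl (pow_zero _).symm⟩
  | mul_left g hg y _ ih =>
    obtain ⟨c, rfl⟩ := hg
    obtain ⟨n, rfl | rfl⟩ := ih <;> fin_cases c
    · exact ⟨n + 1, .inl (pow_succ' _ _).symm⟩
    · exact ⟨n, .inr (b_mul_a_pow n)⟩
    · exact ⟨n + 1, .inr (by rw [pow_succ', mul_assoc]; rfl)⟩
    · refine ⟨n + 2, .inl ?_⟩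
      change 𝐛 * (𝐚 ^ n * 𝐛) = _
      rw [← mul_assoc, b_mul_a_pow, mul_assoc, ← a_mul_a, pow_add, sq]

def lengthParity : PresentedMonoid abRels →* Multiplicative (ℕ × ZMod 2) :=
  PresentedMonoid.lift ![ofAdd (1, 0), ofAdd (1, 1)] <| by
    rintro x y (⟨rfl, rfl⟩ | ⟨rfl, rfl⟩) <;> rfl

theorem lengthParity_a_pow (n : ℕ) : lengthParity (𝐚 ^ n) = ofAdd (n, 0) := by
  induction n with
  | zero => rfl
  | succ n ih =>
    rw [pow_succ, map_mul, ih]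
    rfl

theorem lengthParity_a_pow_mul_b (n : ℕ) : lengthParity (𝐚 ^ n * 𝐛) = ofAdd (n + 1, 1) := by
  rw [map_mul, lengthParity_a_pow]
  rfl

theorem lengthParity_injective : Function.Injective lengthParity := by
  intro x y h
  obtain ⟨m, rfl | rfl⟩ := exists_eq_a_pow_or_eq_a_pow_mul_b x <;>
  obtain ⟨n, rfl | rfl⟩ := exists_eq_a_pow_or_eq_a_pow_mul_b y <;>
  simp_all [lengthParity_a_pow, lengthParity_a_pow_mul_b]

end AbMonoid

/-- The monoid `M = Mon⟨a,b | ab = ba, aa = bb⟩` is left-cancellative. -/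
theorem leftCancellative_abMonoid :
    ∀ x y y' : PresentedMonoid abRels, x * y = x * y' → y = y' := by
  have := AbMonoid.lengthParity_injective.isLeftCancelMul _ (map_mul _)
  exact fun x y y' ↦ mul_left_cancel
end

section
/- Thompson's group F admits no nontrivial decomposition as a direct product: if F ≅ A × B as an internal direct product of subgroups, then A or B is trivial. -/
open scoped commutatorElement in
/-- The relators of the standard finite presentation of Thompson's group `F`:
`F = ⟨x₀, x₁ | [x₀x₁⁻¹, x₀⁻¹x₁x₀], [x₀x₁⁻¹, x₀⁻²x₁x₀²]⟩`,
with generators `x₀ = of false`, `x₁ = of true`. -/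
def thompsonFRels : Set (FreeGroup Bool) :=
  { ⁅FreeGroup.of false * (FreeGroup.of true)⁻¹,
      (FreeGroup.of false)⁻¹ * FreeGroup.of true * FreeGroup.of false⁆,
    ⁅FreeGroup.of false * (FreeGroup.of true)⁻¹,
      (FreeGroup.of false)⁻¹ * (FreeGroup.of false)⁻¹ * FreeGroup.of true *
        FreeGroup.of false * FreeGroup.of false⁆ }

/-- Thompson's group `F`. -/
def ThompsonF : Type := PresentedGroup thompsonFRels

instance : Group ThompsonF := by unfold ThompsonF; infer_instance

/-!
Let `F` act on `ℝ` by order automorphisms, `x₀ ↦ (· - 1)` and `x₁ ↦ bend`. The action is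
faithful: every element is `p q⁻¹` with `p`, `q` sorted positive words in the generators `xₙ`
of the infinite presentation, and the number of letters `xₙ` of a word in `xₙ, xₙ₊₁, …` can be
read off from the image of the point `n`. Every element acts as a translation near `±∞`, so
commutators have bounded support; and since the orbit of `0` is dense while `x₁` contracts
towards `0`, any compact interval can be pushed into any open interval.

Normal subgroups `A`, `B` with `A ⊓ B = ⊥` commute elementwise. If both are nontrivial, pick
`a ∈ A` moving some `p` up, and a nontrivial commutator `b ∈ B` (it exists because the center is
trivial). A conjugate of `b` supported in `(p, a p)` then commutes with `a`, which is impossible.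
-/

open Filter Set
open scoped commutatorElement

namespace OrderIso

section LinearOrder

variable {α : Type*} [LinearOrder α]

lemma inv_apply_eq_iff {e : α ≃o α} {s t : α} : e⁻¹ s = t ↔ s = e t :=
  e.symm_apply_eq

lemma coe_pow (f : α ≃o α) (n : ℕ) : ⇑(f ^ n) = f^[n] := by
  induction n with
  | zero => rfl
  | succ n ih => rw [pow_succ, RelIso.coe_mul, ih, Function.iterate_succ]

lemma commute_of_fixes_Ici_of_fixes_Iic {u v : α ≃o α} (c : α) (hu : ∀ t, c ≤ t → u t = t)
    (hv : ∀ t, t ≤ c → v t = t) : Commute u v := by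
  ext t
  change u (v t) = v (u t)
  rcases le_total t c with htc | hct
  · have hut : u t ≤ c := (u.monotone htc).trans_eq (hu c le_rfl)
    rw [hv t htc, hv _ hut]
  · have hvt : c ≤ v t := (hv c le_rfl).symm.trans_le (v.monotone hct)
    rw [hu t hct, hu _ hvt]

/-- If `c` commutes with `a` and `a` moves `p` up, then `a` maps the points moved by `c` to points
moved by `c`; this is impossible when they all lie in `(p, a p)`. -/
theorem exists_not_commute_conj (G : Subgroup (α ≃o α)) {a b : α ≃o α} {s : Set α}
    (ha : a ≠ 1) (hb : b ≠ 1) (hbs : ∀ t ∉ s, b t = t)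
    (hG : ∀ x y, x < y → ∃ g ∈ G, MapsTo g s (Ioo x y)) :
    ∃ g ∈ G, ¬Commute a (g * b * g⁻¹) := by
  obtain ⟨p, hp⟩ : ∃ p, a p ≠ p := by
    by_contra! h
    exact ha (OrderIso.ext (funext h))
  wlog hpa : p < a p generalizing a p
  · obtain ⟨g, hgG, hg⟩ := this (inv_ne_one.2 ha) (a p) (by simpa [eq_comm] using hp)
      (by simpa using lt_of_le_of_ne (not_lt.1 hpa) hp)
    exact ⟨g, hgG, fun h => hg h.inv_left⟩
  obtain ⟨g, hgG, hgs⟩ := hG p (a p) hpa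
  refine ⟨g, hgG, fun hcomm => ?_⟩
  set c := g * b * g⁻¹
  have hc : ∀ t, c t ≠ t → t ∈ Ioo p (a p) := by
    intro t ht
    by_contra hts
    refine ht ?_
    have : g⁻¹ t ∉ s := fun h => hts (by simpa using hgs h)
    change g (b (g⁻¹ t)) = t
    rw [hbs _ this]
    simp
  obtain ⟨q, hq⟩ : ∃ q, c q ≠ q := by
    by_contra! h
    refine hb ?_
    have : c = 1 := OrderIso.ext (funext h)
    simpa [c] using this
  have hcaq : c (a q) ≠ a q := by
    rw [← RelIso.mul_apply, ← hcomm.eq, RelIso.mul_apply]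
    exact fun h => hq (a.injective h)
  exact (hc _ hcaq).2.not_ge (a.monotone (hc q hq).1.le)

end LinearOrder

section TranslationGerm

variable {l : Filter ℝ} (hl : ∀ c : ℝ, Tendsto (· + c) l l) {f g : ℝ ≃o ℝ} {c d : ℝ}
include hl

lemma mul_eventuallyEq_add (hf : ⇑f =ᶠ[l] (· + c)) (hg : ⇑g =ᶠ[l] (· + d)) :
    ⇑(f * g) =ᶠ[l] (· + (d + c)) := by
  have hgl : Tendsto g l l := (hl d).congr' hg.symm
  filter_upwards [hf.comp_tendsto hgl, hg] with t hft hgt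
  simp only [Function.comp_apply] at hft
  rw [RelIso.mul_apply, hft, hgt, add_assoc]

lemma inv_eventuallyEq_add (hf : ⇑f =ᶠ[l] (· + c)) : ⇑f⁻¹ =ᶠ[l] (· + -c) := by
  filter_upwards [hf.comp_tendsto (hl (-c))] with t ht
  simp only [Function.comp_apply, neg_add_cancel_right] at ht
  exact inv_apply_eq_iff.2 ht.symm

lemma commutatorElement_eventuallyEq_id (hf : ⇑f =ᶠ[l] (· + c)) (hg : ⇑g =ᶠ[l] (· + d)) :
    ⇑⁅f, g⁆ =ᶠ[l] id := by
  have := mul_eventuallyEq_add hl (mul_eventuallyEq_add hl (mul_eventuallyEq_add hl hf hg)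
    (inv_eventuallyEq_add hl hf)) (inv_eventuallyEq_add hl hg)
  rw [commutatorElement_def]
  filter_upwards [this] with t ht
  rw [ht, id]
  ring

end TranslationGerm

end OrderIso

lemma List.head_le_of_pairwise_cons {α : Type*} [Preorder α] {a b : α} {l : List α}
    (hl : (a :: l).Pairwise (· ≤ ·)) (hb : b ∈ a :: l) : a ≤ b :=
  (List.mem_cons.1 hb).elim ge_of_eq (List.rel_of_pairwise_cons hl)

lemma tendsto_add_const_of_eq_atBot_or_atTop {l : Filter ℝ} (hl : l = atBot ∨ l = atTop)
    (c : ℝ) : Tendsto (· + c) l l := by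
  rcases hl with rfl | rfl
  exacts [tendsto_atBot_add_const_right _ c tendsto_id,
    tendsto_atTop_add_const_right _ c tendsto_id]

noncomputable section

namespace ThompsonF

def of (b : Bool) : ThompsonF := PresentedGroup.of b

/-- The generators `x₀, x₁, x₂, …` of the infinite presentation: `xₙ₊₁ = x₀⁻ⁿ x₁ x₀ⁿ`. -/
def gen : ℕ → ThompsonF
  | 0 => of false
  | n + 1 => (of false ^ n)⁻¹ * of true * of false ^ n

lemma gen_one : gen 1 = of true := by simp [gen]

lemma closure_gen : Subgroup.closure {gen 0, gen 1} = ⊤ := by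
  have h := PresentedGroup.closure_range_of thompsonFRels
  rw [Bool.range_eq] at h
  rw [gen_one]
  exact h

lemma commute_gen_two : Commute (gen 0 * (gen 1)⁻¹) (gen 2) := by
  have h := PresentedGroup.one_of_mem (rels := thompsonFRels) (Or.inl rfl)
  rw [map_commutatorElement, commutatorElement_eq_one_iff_commute] at h
  simp only [map_mul, map_inv] at h
  simp only [gen, pow_one]
  exact h

lemma commute_gen_three : Commute (gen 0 * (gen 1)⁻¹) (gen 3) := by
  have h := PresentedGroup.one_of_mem (rels := thompsonFRels) (Or.inr rfl)
  rw [map_commutatorElement, commutatorElement_eq_one_iff_commute] at h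
  simp only [map_mul, map_inv] at h
  have e : gen 3 = (gen 0)⁻¹ * (gen 0)⁻¹ * gen 1 * gen 0 * gen 0 := by simp only [gen]; group
  rw [e, gen_one]
  exact h

lemma conj_gen_zero_pow_symm_gen (j : ℕ) {n : ℕ} (hn : n ≠ 0) :
    (MulAut.conj (gen 0 ^ j)).symm (gen n) = gen (n + j) := by
  obtain ⟨n, rfl⟩ := Nat.exists_eq_succ_of_ne_zero hn
  rw [MulAut.conj_symm_apply, Nat.succ_eq_add_one, Nat.add_right_comm]
  simp only [gen, pow_add]
  group

lemma inv_gen_zero_mul_gen_mul_gen_zero (n : ℕ) :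
    (gen 0)⁻¹ * gen (n + 1) * gen 0 = gen (n + 2) := by
  simpa using conj_gen_zero_pow_symm_gen 1 n.succ_ne_zero

lemma inv_gen_one_mul_gen_mul_gen_one {n : ℕ} (h : Commute (gen 0 * (gen 1)⁻¹) (gen (n + 1))) :
    (gen 1)⁻¹ * gen (n + 1) * gen 1 = gen (n + 2) := by
  rw [← inv_gen_zero_mul_gen_mul_gen_zero]
  calc (gen 1)⁻¹ * gen (n + 1) * gen 1
      = (gen 0)⁻¹ * (gen 0 * (gen 1)⁻¹ * gen (n + 1)) * gen 1 := by group
    _ = (gen 0)⁻¹ * (gen (n + 1) * (gen 0 * (gen 1)⁻¹)) * gen 1 := by rw [h.eq]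
    _ = (gen 0)⁻¹ * gen (n + 1) * gen 0 := by group

lemma commute_gen_zero_mul_inv_gen_one_gen {n : ℕ} (hn : 2 ≤ n) :
    Commute (gen 0 * (gen 1)⁻¹) (gen n) := by
  suffices ∀ m, Commute (gen 0 * (gen 1)⁻¹) (gen (m + 2)) ∧
      Commute (gen 0 * (gen 1)⁻¹) (gen (m + 3)) by
    obtain ⟨m, rfl⟩ := Nat.exists_eq_add_of_le' hn
    exact (this m).1
  intro m
  induction m with
  | zero => exact ⟨commute_gen_two, commute_gen_three⟩
  | succ m ih =>
    refine ⟨ih.2, ?_⟩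
    -- the relation `x₁⁻¹ xₘ₊₂ x₁ = xₘ₊₃`, conjugated by `x₀`
    have h : gen (m + 4) = (gen 2)⁻¹ * gen (m + 3) * gen 2 := by
      calc gen (m + 4) = (gen 0)⁻¹ * gen (m + 3) * gen 0 :=
            (inv_gen_zero_mul_gen_mul_gen_zero _).symm
        _ = (gen 0)⁻¹ * ((gen 1)⁻¹ * gen (m + 2) * gen 1) * gen 0 := by
          rw [inv_gen_one_mul_gen_mul_gen_one ih.1]
        _ = ((gen 0)⁻¹ * gen 1 * gen 0)⁻¹ * ((gen 0)⁻¹ * gen (m + 2) * gen 0) *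
            ((gen 0)⁻¹ * gen 1 * gen 0) := by group
        _ = (gen 2)⁻¹ * gen (m + 3) * gen 2 := by
          rw [inv_gen_zero_mul_gen_mul_gen_zero 0, inv_gen_zero_mul_gen_mul_gen_zero (m + 1)]
    rw [h]
    exact (commute_gen_two.inv_right.mul_right ih.2).mul_right commute_gen_two

lemma inv_gen_mul_gen_mul_gen {k n : ℕ} (h : k < n) :
    (gen k)⁻¹ * gen n * gen k = gen (n + 1) := by
  obtain ⟨m, rfl⟩ := Nat.exists_eq_add_of_lt h
  cases k with
  | zero => rw [zero_add]; exact inv_gen_zero_mul_gen_mul_gen_zero m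
  | succ j =>
    have key := congrArg (MulAut.conj (gen 0 ^ j)).symm
      (inv_gen_one_mul_gen_mul_gen_one
        (commute_gen_zero_mul_inv_gen_one_gen (n := m + 2) le_add_self))
    simp only [map_mul, map_inv, conj_gen_zero_pow_symm_gen j one_ne_zero,
      conj_gen_zero_pow_symm_gen j (n := m + 1 + 1) (by omega),
      conj_gen_zero_pow_symm_gen j (n := m + 1 + 2) (by omega)] at key
    rwa [show 1 + j = j + 1 by ring, show m + 1 + 1 + j = j + 1 + m + 1 by ring,
      show m + 1 + 2 + j = j + 1 + m + 1 + 1 by ring] at key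

lemma gen_mul_gen_of_lt {k n : ℕ} (h : k < n) : gen n * gen k = gen k * gen (n + 1) := by
  rw [← inv_gen_mul_gen_mul_gen h]
  group

lemma inv_gen_mul_gen_of_lt {k n : ℕ} (h : k < n) :
    (gen k)⁻¹ * gen n = gen (n + 1) * (gen k)⁻¹ := by
  rw [← inv_gen_mul_gen_mul_gen h]
  group

lemma inv_gen_mul_gen_of_gt {k n : ℕ} (h : n < k) :
    (gen k)⁻¹ * gen n = gen n * (gen (k + 1))⁻¹ := by
  rw [← inv_gen_mul_gen_mul_gen h]
  group

def word (l : List ℕ) : ThompsonF := (l.map gen).prod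

@[simp] lemma word_nil : word [] = 1 := rfl

@[simp] lemma word_cons (a : ℕ) (l : List ℕ) : word (a :: l) = gen a * word l := by
  simp [word]

lemma word_append (l₁ l₂ : List ℕ) : word (l₁ ++ l₂) = word l₁ * word l₂ := by
  simp [word]
lemma exists_inv_gen_mul_word (k : ℕ) (l : List ℕ) :
    ∃ p q : List ℕ, (gen k)⁻¹ * word l = word p * (word q)⁻¹ := by
  induction l generalizing k with
  | nil => exact ⟨[], [k], by simp⟩
  | cons a l ih =>
    rcases lt_trichotomy k a with h | rfl | h
    · obtain ⟨p, q, hpq⟩ := ih k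
      exact ⟨(a + 1) :: p, q, by
        rw [word_cons, word_cons, ← mul_assoc, inv_gen_mul_gen_of_lt h, mul_assoc, hpq, mul_assoc]⟩
    · exact ⟨l, [], by simp⟩
    · obtain ⟨p, q, hpq⟩ := ih (k + 1)
      exact ⟨a :: p, q, by
        rw [word_cons, word_cons, ← mul_assoc, inv_gen_mul_gen_of_gt h, mul_assoc, hpq, mul_assoc]⟩

lemma exists_word_mul_inv_word (g : ThompsonF) : ∃ p q : List ℕ, g = word p * (word q)⁻¹ := by
  have hg : g ∈ Subgroup.closure {gen 0, gen 1} := closure_gen ▸ Subgroup.mem_top g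
  induction hg using Subgroup.closure_induction_left with
  | one => exact ⟨[], [], by simp⟩
  | mul_left k hk g _ ih =>
    obtain ⟨p, q, rfl⟩ := ih
    rcases hk with rfl | rfl
    · exact ⟨0 :: p, q, by simp [mul_assoc]⟩
    · exact ⟨1 :: p, q, by simp [mul_assoc]⟩
  | inv_mul_cancel k hk g _ ih =>
    obtain ⟨p, q, rfl⟩ := ih
    obtain ⟨n, rfl⟩ : ∃ n, k = gen n := by rcases hk with rfl | rfl <;> exact ⟨_, rfl⟩
    obtain ⟨p', s, hp'⟩ := exists_inv_gen_mul_word n p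
    exact ⟨p', q ++ s, by rw [← mul_assoc, hp', word_append, mul_inv_rev, mul_assoc]⟩

lemma exists_sorted_word_eq_gen_mul {l : List ℕ} (hl : l.Pairwise (· ≤ ·)) (a : ℕ) :
    ∃ l' : List ℕ, l'.Pairwise (· ≤ ·) ∧ (∀ b ∈ l', a ≤ b ∨ b ∈ l) ∧ word l' = gen a * word l := by
  induction l generalizing a with
  | nil => exact ⟨[a], by simp, by simp, by simp⟩
  | cons b l ih =>
    rw [List.pairwise_cons] at hl
    by_cases hab : a ≤ b
    · refine ⟨a :: b :: l, ?_, fun c hc => (List.mem_cons.1 hc).imp ge_of_eq id, by simp⟩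
      have hbl := List.pairwise_cons.2 hl
      exact List.pairwise_cons.2
        ⟨fun c hc => hab.trans (List.head_le_of_pairwise_cons hbl hc), hbl⟩
    · rw [not_le] at hab
      obtain ⟨l', hl', hmem, hword⟩ := ih hl.2 (a + 1)
      refine ⟨b :: l', List.pairwise_cons.2 ⟨fun c hc => ?_, hl'⟩, fun c hc => ?_, ?_⟩
      · rcases hmem c hc with h | h
        exacts [by omega, hl.1 c h]
      · rcases List.mem_cons.1 hc with rfl | hc
        · exact Or.inr List.mem_cons_self
        · rcases hmem c hc with h | h
          exacts [Or.inl (by omega), Or.inr (List.mem_cons_of_mem _ h)]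
      · rw [word_cons, hword, word_cons, ← mul_assoc, ← mul_assoc, gen_mul_gen_of_lt hab]

lemma exists_sorted_word_eq (l : List ℕ) :
    ∃ l' : List ℕ, l'.Pairwise (· ≤ ·) ∧ word l' = word l := by
  induction l with
  | nil => exact ⟨[], by simp, rfl⟩
  | cons a l ih =>
    obtain ⟨l₁, hl₁, h⟩ := ih
    obtain ⟨l', hl', -, hword⟩ := exists_sorted_word_eq_gen_mul hl₁ a
    exact ⟨l', hl', by rw [hword, word_cons, h]⟩

lemma exists_sorted_word_mul_inv_word (g : ThompsonF) :
    ∃ p q : List ℕ, p.Pairwise (· ≤ ·) ∧ q.Pairwise (· ≤ ·) ∧ g = word p * (word q)⁻¹ := by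
  obtain ⟨p, q, rfl⟩ := exists_word_mul_inv_word g
  obtain ⟨p', hp', hp⟩ := exists_sorted_word_eq p
  obtain ⟨q', hq', hq⟩ := exists_sorted_word_eq q
  exact ⟨p', q', hp', hq', by rw [hp, hq]⟩

/-- The image of `x₁`: the identity on `(-∞, 0]`, slope `1/2` on `[0, 2]` and translation by `-1`
on `[2, ∞)`. -/
def bend : ℝ ≃o ℝ :=
  StrictMono.orderIsoOfRightInverse (fun t => min t (max (t / 2) (t - 1)))
    (fun _ _ h => min_lt_min h (max_lt_max (by linarith) (by linarith)))
    (fun t => max t (min (2 * t) (t + 1)))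
    (fun t => by simp only [min_def, max_def]; split_ifs <;> linarith)

lemma bend_apply (t : ℝ) : bend t = min t (max (t / 2) (t - 1)) := rfl

lemma bend_of_nonpos {t : ℝ} (h : t ≤ 0) : bend t = t := by
  rw [bend_apply, min_eq_left (le_max_of_le_left (by linarith))]

lemma bend_of_mem_Icc {t : ℝ} (h₀ : 0 ≤ t) (h₂ : t ≤ 2) : bend t = t / 2 := by
  rw [bend_apply, max_eq_left (by linarith), min_eq_right (by linarith)]

lemma bend_of_two_le {t : ℝ} (h : 2 ≤ t) : bend t = t - 1 := by
  rw [bend_apply, max_eq_right (by linarith), min_eq_right (by linarith)]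

lemma bend_le (t : ℝ) : bend t ≤ t := min_le_left _ _

lemma bend_lt {t : ℝ} (h : 0 < t) : bend t < t := by
  rw [bend_apply]
  exact min_lt_of_right_lt (max_lt (by linarith) (by linarith))

lemma bend_le_sub_div {t T : ℝ} (h₀ : 0 ≤ t) (hT : 2 ≤ T) (ht : t ≤ T) : bend t ≤ t - t / T := by
  have : t / T ≤ 1 := (div_le_one (by linarith)).2 ht
  have : t / T ≤ t / 2 := div_le_div_of_nonneg_left h₀ (by norm_num) hT
  exact (min_le_right _ _).trans (max_le (by linarith) (by linarith))

def action : ThompsonF →* ℝ ≃o ℝ :=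
  PresentedGroup.toGroup (f := fun b => cond b bend (OrderIso.addRight (-1))) <| by
    have h₀ : ∀ t, (OrderIso.addRight (-1 : ℝ))⁻¹ t = t + 1 := fun t =>
      OrderIso.inv_apply_eq_iff.2 (by simp)
    have h₁ : ∀ t, 1 ≤ t → bend⁻¹ t = t + 1 := fun t ht =>
      OrderIso.inv_apply_eq_iff.2 (by rw [bend_of_two_le (by linarith)]; ring)
    rintro r (rfl | rfl) <;>
    · rw [map_commutatorElement, commutatorElement_eq_one_iff_commute]
      simp only [map_mul, map_inv, FreeGroup.lift_apply_of, cond]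
      refine OrderIso.commute_of_fixes_Ici_of_fixes_Iic 1 (fun t ht => ?_) (fun t ht => ?_)
      · simp [RelIso.mul_apply, h₁ t ht]
      · simp only [RelIso.mul_apply, OrderIso.addRight_apply, h₀]
        rw [bend_of_nonpos (by linarith)]
        ring

lemma action_gen_zero : action (gen 0) = OrderIso.addRight (-1) := PresentedGroup.toGroup.of _

lemma action_gen_one : action (gen 1) = bend := by
  rw [gen_one]
  exact PresentedGroup.toGroup.of _

lemma action_gen_zero_zpow_apply (k : ℤ) (t : ℝ) : action (gen 0 ^ k) t = t - k := by
  induction k using Int.induction_on generalizing t with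
  | zero => simp
  | succ k ih =>
    rw [zpow_add_one, map_mul, RelIso.mul_apply, action_gen_zero, OrderIso.addRight_apply, ih]
    push_cast
    ring
  | pred k ih =>
    rw [zpow_sub_one, map_mul, map_inv, RelIso.mul_apply, ih, action_gen_zero,
      OrderIso.inv_apply_eq_iff.2 (by simp : t = OrderIso.addRight (-1 : ℝ) (t + 1))]
    push_cast
    ring

lemma action_gen_succ_apply (n : ℕ) (t : ℝ) : action (gen (n + 1)) t = bend (t - n) + n := by
  have h : ∀ s : ℝ, action (gen 0 ^ n) s = s - n := fun s => by
    simpa using action_gen_zero_zpow_apply n s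
  have e : gen (n + 1) = (gen 0 ^ n)⁻¹ * gen 1 * gen 0 ^ n := by simp [gen]
  rw [e, map_mul, map_mul, map_inv, RelIso.mul_apply, RelIso.mul_apply, h, action_gen_one,
    OrderIso.inv_apply_eq_iff, h, add_sub_cancel_right]

lemma action_gen_apply_le (n : ℕ) (t : ℝ) : action (gen n) t ≤ t := by
  cases n with
  | zero => simp [action_gen_zero]
  | succ n => rw [action_gen_succ_apply]; linarith [bend_le (t - n)]

lemma action_gen_succ_apply_of_le {n : ℕ} {t : ℝ} (h : t ≤ n) : action (gen (n + 1)) t = t := by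
  rw [action_gen_succ_apply, bend_of_nonpos (by linarith)]
  ring

lemma action_gen_apply_self_lt (n : ℕ) : action (gen n) n < n := by
  cases n with
  | zero => simp [action_gen_zero]
  | succ n =>
    rw [action_gen_succ_apply]
    push_cast
    linarith [bend_lt (show (0 : ℝ) < n + 1 - n by linarith)]

/-- Below `n`, only the letters `xₙ` of a word in `xₙ, xₙ₊₁, …` act. -/
lemma action_word_apply_of_le {n : ℕ} {l : List ℕ} (hl : ∀ a ∈ l, n ≤ a) {t : ℝ} (ht : t ≤ n) :
    action (word l) t = (action (gen n))^[l.count n] t := by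
  induction l with
  | nil => simp
  | cons a l ih =>
    rw [word_cons, map_mul, RelIso.mul_apply, ih fun b hb => hl b (List.mem_cons_of_mem a hb)]
    obtain rfl | han := eq_or_ne a n
    · rw [List.count_cons_self, Function.iterate_succ_apply']
    · obtain ⟨m, rfl⟩ : ∃ m, a = m + 1 :=
        Nat.exists_eq_succ_of_ne_zero (by have := hl a List.mem_cons_self; omega)
      rw [List.count_cons_of_ne han, action_gen_succ_apply_of_le]
      calc (action (gen n))^[l.count n] t ≤ t :=
            Function.iterate_le_id_of_le_id (action_gen_apply_le n) _ t
        _ ≤ m := ht.trans (by exact_mod_cast (show n ≤ m by have := hl _ List.mem_cons_self; omega))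

lemma count_eq_of_action_word_eq {n : ℕ} {p q : List ℕ} (hp : ∀ a ∈ p, n ≤ a)
    (hq : ∀ a ∈ q, n ≤ a) (h : action (word p) = action (word q)) : p.count n = q.count n :=
  ((action (gen n)).strictMono.strictAnti_iterate_of_map_lt (action_gen_apply_self_lt n)).injective
    (by simp only [← action_word_apply_of_le hp le_rfl, ← action_word_apply_of_le hq le_rfl, h])

lemma mem_of_action_word_eq {a : ℕ} {p q : List ℕ} (hp : (a :: p).Pairwise (· ≤ ·))
    (hq : ∀ b ∈ q, a ≤ b) (h : action (word (a :: p)) = action (word q)) : a ∈ q := by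
  rw [← List.count_pos_iff,
    ← count_eq_of_action_word_eq (fun _ => List.head_le_of_pairwise_cons hp) hq h,
    List.count_cons_self]
  exact Nat.succ_pos _

lemma eq_of_action_word_eq {p q : List ℕ} (hp : p.Pairwise (· ≤ ·)) (hq : q.Pairwise (· ≤ ·))
    (h : action (word p) = action (word q)) : p = q := by
  induction p generalizing q with
  | nil =>
    cases q with
    | nil => rfl
    | cons b q => exact absurd (mem_of_action_word_eq hq (by simp) h.symm) (List.not_mem_nil)
  | cons a p ih =>
    cases q with
    | nil => exact absurd (mem_of_action_word_eq hp (by simp) h) (List.not_mem_nil)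
    | cons b q =>
      have hab : a = b := by
        rcases le_total a b with hab | hab
        · exact hab.antisymm (List.head_le_of_pairwise_cons hq (mem_of_action_word_eq hp
            (fun c hc => hab.trans (List.head_le_of_pairwise_cons hq hc)) h))
        · exact (hab.antisymm (List.head_le_of_pairwise_cons hp (mem_of_action_word_eq hq
            (fun c hc => hab.trans (List.head_le_of_pairwise_cons hp hc)) h.symm))).symm
      subst hab
      rw [ih (List.pairwise_cons.1 hp).2 (List.pairwise_cons.1 hq).2
        (mul_left_cancel (by simpa only [word_cons, map_mul] using h))]

theorem action_injective : Function.Injective action := by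
  refine (injective_iff_map_eq_one action).2 fun g hg => ?_
  obtain ⟨p, q, hp, hq, rfl⟩ := exists_sorted_word_mul_inv_word g
  rw [map_mul, map_inv, mul_inv_eq_one] at hg
  rw [eq_of_action_word_eq hp hq hg, mul_inv_cancel]

lemma exists_action_eventuallyEq_add (g : ThompsonF) {l : Filter ℝ} (hl : l = atBot ∨ l = atTop) :
    ∃ c : ℝ, ⇑(action g) =ᶠ[l] (· + c) := by
  have hl' := tendsto_add_const_of_eq_atBot_or_atTop hl
  have hg : g ∈ Subgroup.closure {gen 0, gen 1} := closure_gen ▸ Subgroup.mem_top g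
  induction hg using Subgroup.closure_induction with
  | mem g hg =>
    rcases hg with rfl | rfl
    · exact ⟨-1, Eventually.of_forall fun t => by simp [action_gen_zero]⟩
    · rw [action_gen_one]
      rcases hl with rfl | rfl
      · exact ⟨0, (eventually_le_atBot 0).mono fun t ht => by simp [bend_of_nonpos ht]⟩
      · exact ⟨-1, (eventually_ge_atTop 2).mono fun t ht => by
          simp [bend_of_two_le ht, sub_eq_add_neg]⟩
  | one => exact ⟨0, Eventually.of_forall fun t => by simp⟩
  | mul f g _ _ hf hg =>
    obtain ⟨c, hc⟩ := hf
    obtain ⟨d, hd⟩ := hg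
    exact ⟨d + c, by rw [map_mul]; exact OrderIso.mul_eventuallyEq_add hl' hc hd⟩
  | inv g _ hg =>
    obtain ⟨c, hc⟩ := hg
    exact ⟨-c, by rw [map_inv]; exact OrderIso.inv_eventuallyEq_add hl' hc⟩

lemma exists_action_commutatorElement_fixes (u v : ThompsonF) :
    ∃ m M : ℝ, ∀ t ∉ Icc m M, action ⁅u, v⁆ t = t := by
  have key : ∀ l : Filter ℝ, (l = atBot ∨ l = atTop) → ∀ᶠ t in l, action ⁅u, v⁆ t = t :=
    fun l hl => by
      obtain ⟨c, hc⟩ := exists_action_eventuallyEq_add u hl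
      obtain ⟨d, hd⟩ := exists_action_eventuallyEq_add v hl
      rw [map_commutatorElement]
      exact OrderIso.commutatorElement_eventuallyEq_id
        (tendsto_add_const_of_eq_atBot_or_atTop hl) hc hd
  obtain ⟨m, hm⟩ := eventually_atBot.1 (key atBot (Or.inl rfl))
  obtain ⟨M, hM⟩ := eventually_atTop.1 (key atTop (Or.inr rfl))
  refine ⟨m, M, fun t ht => ?_⟩
  rcases not_and_or.1 ht with h | h
  exacts [hm t (not_le.1 h).le, hM t (not_le.1 h).le]

lemma exists_action_apply_zero_eq_dyadic (j : ℕ) (m : ℤ) : ∃ g, action g 0 = m / 2 ^ j := by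
  induction j generalizing m with
  | zero => exact ⟨gen 0 ^ (-m), by rw [action_gen_zero_zpow_apply]; simp⟩
  | succ j ih =>
    have h2 : (0 : ℤ) < 2 ^ (j + 1) := by positivity
    obtain ⟨g, hg⟩ := ih (m % 2 ^ (j + 1))
    have hr₀ : (0 : ℝ) ≤ (m % 2 ^ (j + 1) : ℤ) := by exact_mod_cast Int.emod_nonneg m h2.ne'
    have hr₁ : ((m % 2 ^ (j + 1) : ℤ) : ℝ) ≤ 2 ^ j * 2 := by
      rw [← pow_succ]
      exact_mod_cast (Int.emod_lt_of_pos m h2).le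
    refine ⟨gen 0 ^ (-(m / 2 ^ (j + 1))) * gen 1 * g, ?_⟩
    rw [map_mul, map_mul, RelIso.mul_apply, RelIso.mul_apply, hg, action_gen_one,
      bend_of_mem_Icc (by positivity) ((div_le_iff₀ (by positivity)).2 (by linarith)),
      action_gen_zero_zpow_apply]
    conv_rhs => rw [← Int.emod_add_mul_ediv m (2 ^ (j + 1))]
    push_cast
    field_simp
    ring

lemma exists_action_apply_zero_mem_Ioo {x y : ℝ} (h : x < y) : ∃ g, action g 0 ∈ Ioo x y := by
  obtain ⟨j, hj⟩ := pow_unbounded_of_one_lt (y - x)⁻¹ one_lt_two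
  obtain ⟨g, hg⟩ := exists_action_apply_zero_eq_dyadic j (⌊x * 2 ^ j⌋ + 1)
  have hj' : 1 < (y - x) * 2 ^ j := by
    rwa [inv_lt_iff_one_lt_mul₀ (sub_pos.2 h), mul_comm] at hj
  refine ⟨g, hg ▸ ⟨(lt_div_iff₀ (by positivity)).2 ?_, (div_lt_iff₀ (by positivity)).2 ?_⟩⟩
  · push_cast
    exact Int.lt_floor_add_one _
  · push_cast
    linarith [Int.floor_le (x * 2 ^ j)]

lemma bend_iterate_le {t T : ℝ} (h₀ : 0 ≤ t) (hT : 2 ≤ T) (ht : t ≤ T) (N : ℕ) :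
    bend^[N] t ≤ (1 - T⁻¹) ^ N * t := by
  induction N with
  | zero => simp
  | succ N ih =>
    have hs₀ : 0 ≤ bend^[N] t :=
      (Function.iterate_fixed (bend_of_nonpos le_rfl) N).symm.trans_le (bend.monotone.iterate N h₀)
    have hsT : bend^[N] t ≤ T := (Function.iterate_le_id_of_le_id bend_le N t).trans ht
    rw [Function.iterate_succ_apply', pow_succ]
    calc bend (bend^[N] t) ≤ bend^[N] t - bend^[N] t / T := bend_le_sub_div hs₀ hT hsT
      _ = (1 - T⁻¹) * bend^[N] t := by ring
      _ ≤ (1 - T⁻¹) * ((1 - T⁻¹) ^ N * t) :=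
        mul_le_mul_of_nonneg_left ih (sub_nonneg.2 (inv_le_one_of_one_le₀ (by linarith)))
      _ = (1 - T⁻¹) ^ N * (1 - T⁻¹) * t := by ring

lemma exists_action_mapsTo_Ioo_zero (m M : ℝ) {ε : ℝ} (hε : 0 < ε) :
    ∃ g, MapsTo (action g) (Icc m M) (Ioo 0 ε) := by
  set K : ℤ := ⌊-m⌋ + 1
  obtain ⟨T, hT, hMT⟩ : ∃ T : ℝ, 2 ≤ T ∧ M + K ≤ T :=
    ⟨max 2 (M + K), le_max_left _ _, le_max_right _ _⟩
  have hT₀ : 0 < T := by linarith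
  obtain ⟨N, hN⟩ := exists_pow_lt_of_lt_one (div_pos hε hT₀) (sub_lt_self 1 (inv_pos.2 hT₀))
  refine ⟨gen 1 ^ N * gen 0 ^ (-K), fun t ht => ?_⟩
  have hK : 0 < t + K := by
    have := Int.lt_floor_add_one (-m)
    push_cast [K]
    linarith [ht.1]
  have hKT : t + K ≤ T := by linarith [ht.2]
  have hact : action (gen 1 ^ N * gen 0 ^ (-K)) t = bend^[N] (t + K) := by
    rw [map_mul, RelIso.mul_apply, action_gen_zero_zpow_apply, map_pow, action_gen_one,
      OrderIso.coe_pow]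
    push_cast
    ring_nf
  rw [hact]
  refine ⟨(Function.iterate_fixed (bend_of_nonpos le_rfl) N).symm.trans_lt
    (bend.strictMono.iterate N hK), ?_⟩
  calc bend^[N] (t + K) ≤ (1 - T⁻¹) ^ N * (t + K) := bend_iterate_le hK.le hT hKT N
    _ ≤ (1 - T⁻¹) ^ N * T :=
        mul_le_mul_of_nonneg_left hKT
          (pow_nonneg (sub_nonneg.2 (inv_le_one_of_one_le₀ (by linarith))) N)
    _ < ε / T * T := mul_lt_mul_of_pos_right hN hT₀
    _ = ε := div_mul_cancel₀ ε hT₀.ne'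

lemma exists_action_mapsTo_Ioo (m M : ℝ) {x y : ℝ} (h : x < y) :
    ∃ g, MapsTo (action g) (Icc m M) (Ioo x y) := by
  obtain ⟨w, hw⟩ := exists_action_apply_zero_mem_Ioo h
  obtain ⟨w', hw'⟩ := exists_action_apply_zero_mem_Ioo hw.2
  obtain ⟨g, hg⟩ := exists_action_mapsTo_Ioo_zero m M ((action w).lt_symm_apply.2 hw'.1)
  refine ⟨w * g, fun t ht => ?_⟩
  rw [map_mul, RelIso.mul_apply]
  exact ⟨hw.1.trans ((action w).strictMono (hg ht).1),
    ((action w).lt_symm_apply.1 (hg ht).2).trans hw'.2⟩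

theorem exists_not_commute_conj_commutatorElement {a u v : ThompsonF} (ha : a ≠ 1)
    (huv : ⁅u, v⁆ ≠ 1) : ∃ g, ¬Commute a (g * ⁅u, v⁆ * g⁻¹) := by
  obtain ⟨m, M, hfix⟩ := exists_action_commutatorElement_fixes u v
  obtain ⟨f, hf, hg⟩ := OrderIso.exists_not_commute_conj action.range
    ((map_ne_one_iff action action_injective).2 ha)
    ((map_ne_one_iff action action_injective).2 huv) hfix
    fun x y hxy => by
      obtain ⟨g, hg⟩ := exists_action_mapsTo_Ioo m M hxy
      exact ⟨action g, ⟨g, rfl⟩, hg⟩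
  obtain ⟨g, rfl⟩ := hf
  exact ⟨g, fun h => hg (by simpa only [map_mul, map_inv] using h.map action)⟩

lemma commutatorElement_gen_zero_gen_one_ne_one : ⁅gen 0, gen 1⁆ ≠ 1 := by
  rw [Ne, commutatorElement_eq_one_iff_commute]
  intro h
  have := congrArg (· 1) (h.map action).eq
  simp only [RelIso.mul_apply, action_gen_zero, action_gen_one, OrderIso.addRight_apply] at this
  rw [bend_of_mem_Icc zero_le_one one_le_two, bend_of_nonpos (by norm_num)] at this
  norm_num at this

theorem exists_not_commute_of_ne_one {z : ThompsonF} (hz : z ≠ 1) : ∃ g, ¬Commute z g := by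
  obtain ⟨g, hg⟩ :=
    exists_not_commute_conj_commutatorElement hz commutatorElement_gen_zero_gen_one_ne_one
  exact ⟨_, hg⟩

end ThompsonF
end

theorem thompsonF_directly_indecomposable_general (A B : Subgroup ThompsonF)
    (hA : A.Normal) (hB : B.Normal) (hinf : A ⊓ B = ⊥) :
    A = ⊥ ∨ B = ⊥ := by
  rcases A.bot_or_exists_ne_one with hA₀ | ⟨a, haA, ha⟩
  · exact Or.inl hA₀
  rcases B.bot_or_exists_ne_one with hB₀ | ⟨b, hbB, hb⟩
  · exact Or.inr hB₀
  obtain ⟨h, hbh⟩ := ThompsonF.exists_not_commute_of_ne_one hb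
  have hbhB : ⁅b, h⁆ ∈ B :=
    Subgroup.commutator_le_left B ⊤ (Subgroup.commutator_mem_commutator hbB (Subgroup.mem_top h))
  obtain ⟨g, hg⟩ := ThompsonF.exists_not_commute_conj_commutatorElement ha
    (mt commutatorElement_eq_one_iff_commute.1 hbh)
  exact (hg (Subgroup.commute_of_normal_of_disjoint A B hA hB (disjoint_iff.2 hinf) a _ haA
    (hB.conj_mem _ hbhB g))).elim

/-- Thompson's group `F` admits no nontrivial decomposition as an (internal) direct
product: if `F = A × B` then `A` or `B` is trivial. -/
theorem thompsonF_directly_indecomposable (A B : Subgroup ThompsonF)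
    (hA : A.Normal) (hB : B.Normal) (hinf : A ⊓ B = ⊥) (hsup : A ⊔ B = ⊤) :
    A = ⊥ ∨ B = ⊥ :=
  thompsonF_directly_indecomposable_general A B hA hB hinf
end

section
/- Let G = N ⋊ Q be a semidirect product where N is the kernel of the quotient map q : G → Q, Q is a nonabelian simple group. If H ⊴ G is a normal subgroup admitting a decomposition H = A × B with the normal closures of A and of B in G both equal to H, then H ⊆ N. -/
/-- Let `N ⊴ G` with `G/N` a nonabelian simple group. If `H ⊴ G` is a normal
subgroup which decomposes as an internal direct product `H = A × B` such that the
normal closures (in `G`) of `A` and of `B` both equal `H`, then `H ⊆ N`. -/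
theorem le_of_decomposable_normal_subgroup {G : Type*} [Group G]
    (N : Subgroup G) [N.Normal]
    [IsSimpleGroup (G ⧸ N)] (hnab : ∃ x y : G ⧸ N, x * y ≠ y * x)
    (H : Subgroup G) [H.Normal]
    (A B : Subgroup G) (hAH : A ≤ H) (hBH : B ≤ H)
    (hcomm : ∀ a ∈ A, ∀ b ∈ B, a * b = b * a)
    (hinf : A ⊓ B = ⊥) (hsup : A ⊔ B = H)
    (hNCA : Subgroup.normalClosure (A : Set G) = H)
    (hNCB : Subgroup.normalClosure (B : Set G) = H) :
    H ≤ N := by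
  obtain ⟨x, y, hxy⟩ := hnab
  have hnt : Nontrivial (G ⧸ N) := ⟨⟨x * y, y * x, hxy⟩⟩
  set f := QuotientGroup.mk' N with hf
  have hfs : Function.Surjective f := QuotientGroup.mk'_surjective N
  have hker : ∀ g : G, f g = 1 ↔ g ∈ N := fun g => QuotientGroup.eq_one_iff g
  have hKnorm : (H.map f).Normal := Subgroup.Normal.map ‹H.Normal› f hfs
  rcases hKnorm.eq_bot_or_eq_top with hK | hK
  · intro h hh
    have : f h ∈ H.map f := Subgroup.mem_map_of_mem f hh
    rw [hK, Subgroup.mem_bot] at this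
    exact (hker h).1 this
  · exfalso
    -- if a subgroup X with normal closure H lies in N, contradiction
    have key : ∀ X : Subgroup G, Subgroup.normalClosure (X : Set G) = H →
        X ≤ N → False := by
      intro X hX hXN
      have : H ≤ N := hX ▸ Subgroup.normalClosure_le_normal hXN
      have : H.map f ≤ N.map f := Subgroup.map_mono this
      rw [hK] at this
      have h1 : (1 : G ⧸ N) ∈ N.map f := this trivial
      obtain ⟨z, hz⟩ := exists_ne (1 : G ⧸ N)
      have : z ∈ N.map f := this trivial
      obtain ⟨n, hn, rfl⟩ := this
      exact hz ((hker n).2 hn)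
    -- A is normalized by H
    have hconj : ∀ h ∈ H, (∀ a ∈ A, h * a * h⁻¹ ∈ A) ∧ (∀ a ∈ A, h⁻¹ * a * h ∈ A) := by
      intro h hh
      rw [← hsup, Subgroup.sup_eq_closure] at hh
      refine Subgroup.closure_induction ?_ ?_ ?_ ?_ hh
      · rintro x (hx | hx)
        · exact ⟨fun a ha => A.mul_mem (A.mul_mem hx ha) (A.inv_mem hx),
            fun a ha => A.mul_mem (A.mul_mem (A.inv_mem hx) ha) hx⟩
        · constructor
          · intro a ha
            have hc := hcomm a ha x hx
            have e : x * a * x⁻¹ = a := by rw [← hc]; group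
            rw [e]; exact ha
          · intro a ha
            have hc := hcomm a ha x hx
            have e : x⁻¹ * a * x = a := by rw [mul_assoc, hc]; group
            rw [e]; exact ha
      · constructor <;> intro a ha <;> simpa using ha
      · rintro u v hu' hv' ⟨hu1, hu2⟩ ⟨hv1, hv2⟩
        constructor
        · intro a ha
          have h' := hu1 _ (hv1 a ha)
          have e : u * (v * a * v⁻¹) * u⁻¹ = (u * v) * a * (u * v)⁻¹ := by group
          rwa [e] at h'
        · intro a ha
          have h' := hv2 _ (hu2 a ha)
          have e : v⁻¹ * (u⁻¹ * a * u) * v = (u * v)⁻¹ * a * (u * v) := by group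
          rwa [e] at h'
      · rintro u hu' ⟨hu1, hu2⟩
        exact ⟨fun a ha => by simpa using hu2 a ha, fun a ha => by simpa using hu1 a ha⟩
    -- A.map f is normal in G/N
    have hAn : (A.map f).Normal := by
      constructor
      rintro _ ⟨a, ha, rfl⟩ g
      have hg : g ∈ H.map f := by rw [hK]; trivial
      obtain ⟨h, hhH, rfl⟩ := hg
      exact ⟨h * a * h⁻¹, (hconj h hhH).1 a ha, by simp [map_mul]⟩
    rcases hAn.eq_bot_or_eq_top with hA | hA
    · refine key A hNCA fun a ha => ?_
      have : f a ∈ A.map f := Subgroup.mem_map_of_mem f ha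
      rw [hA, Subgroup.mem_bot] at this
      exact (hker a).1 this
    · -- B maps into the center, which is trivial
      have hcen : ∀ b ∈ B, f b = 1 := by
        intro b hb
        have hbz : f b ∈ Subgroup.center (G ⧸ N) := by
          rw [Subgroup.mem_center_iff]
          intro g
          have hg : g ∈ A.map f := by rw [hA]; trivial
          obtain ⟨a, ha, rfl⟩ := hg
          rw [← map_mul, ← map_mul, hcomm a ha b hb]
        rcases (inferInstance : (Subgroup.center (G ⧸ N)).Normal).eq_bot_or_eq_top with hc | hc
        · rw [hc, Subgroup.mem_bot] at hbz; exact hbz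
        · exact absurd (fun u v => Subgroup.mem_center_iff.1 (hc ▸ Subgroup.mem_top v : v ∈ Subgroup.center (G ⧸ N)) u) (by push_neg; exact ⟨x, y, hxy⟩)
      exact key B hNCB fun b hb => (hker b).1 (hcen b hb)
end

section
/- Let Γ be a group acting on a set Q such that Q has exactly one finite orbit, a fixed point q₀. Let A be a subgroup of the restricted wreath product W = (⊕_Q K) ⋊ Γ (K any group) contained in ⊕_Q K and suppose A commutes elementwise with a set of elements of W whose images under the projection W → Γ exhaust Γ. Then every element of A is supported in {q₀}. -/
variable {Q Γ K : Type*} [Group Γ] [MulAction Γ Q] [Group K]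

/-- The shift automorphism of the group of functions `Q → K` induced by `g : Γ`. -/
def shiftEquiv (g : Γ) : (Q → K) ≃* (Q → K) where
  toFun f q := f (g⁻¹ • q)
  invFun f q := f (g • q)
  left_inv f := funext fun q => by simp
  right_inv f := funext fun q => by simp
  map_mul' f h := rfl

/-- The shift action of `Γ` on the group of functions `Q → K`, as a homomorphism
into the automorphism group. -/
def shiftHom : Γ →* MulAut (Q → K) where
  toFun := shiftEquiv
  map_one' := by
    ext f q
    simp [shiftEquiv]
  map_mul' g h := by
    ext f q
    simp [shiftEquiv, mul_smul]

/-- Suppose the `Γ`-set `Q` has exactly one finite orbit, namely a fixed point `q₀`.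
If `A` is a subgroup of the restricted wreath product `W = (⊕_Q K) ⋊ Γ` contained in
the (finitely supported part of the) base group `⊕_Q K`, and `A` commutes
elementwise with a set `S` of elements of `W` whose projections to `Γ` exhaust `Γ`,
then every element of `A` is supported in `{q₀}`. -/
theorem support_subset_fixedPoint (q₀ : Q)
    (hfix : ∀ g : Γ, g • q₀ = q₀)
    (huniq : ∀ q : Q, (MulAction.orbit Γ q).Finite → q = q₀)
    (A : Subgroup (SemidirectProduct (Q → K) Γ shiftHom))
    (hAbase : ∀ w ∈ A, w.right = 1)
    (hAfin : ∀ w ∈ A, (Function.mulSupport w.left).Finite)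
    (S : Set (SemidirectProduct (Q → K) Γ shiftHom))
    (hSfin : ∀ s ∈ S, (Function.mulSupport s.left).Finite)
    (hcomm : ∀ w ∈ A, ∀ s ∈ S, Commute w s)
    (hSexh : ∀ g : Γ, ∃ s ∈ S, s.right = g) :
    ∀ w ∈ A, Function.mulSupport w.left ⊆ {q₀} := by
  intro w hw q hq
  have : q = q₀ := by
    apply huniq
    apply Set.Finite.subset (hAfin w hw)
    rintro _ ⟨g, rfl⟩
    obtain ⟨s, hs, hsr⟩ := hSexh g
    have hc := hcomm w hw s hs
    have hml := congrArg SemidirectProduct.left hc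
    rw [SemidirectProduct.mul_left, SemidirectProduct.mul_left, hAbase w hw, hsr,
      map_one] at hml
    have hpt := congrFun hml (g • q)
    simp only [MulAut.one_apply, Pi.mul_apply] at hpt
    have hval : (shiftHom (K := K) g w.left) (g • q) = w.left q := by
      simp [shiftHom, shiftEquiv]
    rw [hval] at hpt
    have : w.left (g • q) = s.left (g • q) * w.left q * (s.left (g • q))⁻¹ := by
      rw [eq_mul_inv_iff_mul_eq]
      exact hpt
    simp only [Function.mem_mulSupport, this]
    intro h
    apply hq
    have := congrArg (fun x => (s.left (g • q))⁻¹ * x * s.left (g • q)) h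
    simpa [mul_assoc] using this
  exact this
end
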